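/- arXiv:2301.11033 — 5 statements merged into one kernel-verified Lean document; each statement's English description precedes it below -/
import Mathlib

section
/- Let R be a commutative Noetherian ring and I an ideal of R. Let J and K be ideals of R contained in I such that K ⊆ I² and I = J + K. Then there exists an element e ∈ K such that e(1 - e) ∈ J and I = J + (e), i.e., I is generated by J together with e. -/
/-- Mohan Kumar's lemma: given ideals `J, K ≤ I` with `K ⊆ I²` and `I = J + K`,
there is `e ∈ K` with `e(1-e) ∈ J` and `I = J + (e)`. -/
theorem stmt_0 {R : Type*} [CommRing R] [IsNoetherianRing R]
    (I J K : Ideal R) (hJ : J ≤ I) (hK : K ≤ I ^ 2) (hJK : I = J ⊔ K) :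
    ∃ e ∈ K, e * (1 - e) ∈ J ∧ I = J ⊔ Ideal.span {e} := by
  have hKI : K ≤ I := le_trans hK (Ideal.pow_le_self two_ne_zero)
  let f := Ideal.Quotient.mk J
  have hmap : I.map f = K.map f := by
    rw [hJK, Ideal.map_sup, Ideal.map_quotient_self, bot_sup_eq]
  have hfg : (I.map f).FG := IsNoetherian.noetherian _
  have hle : I.map f ≤ (K.map f) • (I.map f) := by
    rw [smul_eq_mul, ← hmap, ← sq, ← Ideal.map_pow]
    rw [hmap]; exact Ideal.map_mono hK
  obtain ⟨r, hr1, hr0⟩ :=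
    Submodule.exists_sub_one_mem_and_smul_eq_zero_of_fg_of_le_smul _ _ hfg hle
  have h1r : 1 - r ∈ K.map f := by
    have := (K.map f).neg_mem hr1
    simpa [neg_sub] using this
  obtain ⟨e, heK, hef⟩ :=
    (Ideal.mem_map_iff_of_surjective f Ideal.Quotient.mk_surjective).mp h1r
  have heI : e ∈ I := hKI heK
  have key : ∀ x ∈ I, x - e * x ∈ J := by
    intro x hx
    rw [← Ideal.Quotient.eq_zero_iff_mem]
    have hx' : f x ∈ I.map f := Ideal.mem_map_of_mem f hx
    have := hr0 (f x) hx'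
    rw [smul_eq_mul] at this
    calc f (x - e * x) = f x - f e * f x := by simp [f]
    _ = f x - (1 - r) * f x := by rw [hef]
    _ = r * f x := by ring
    _ = 0 := this
  refine ⟨e, heK, ?_, ?_⟩
  · rw [← Ideal.Quotient.eq_zero_iff_mem]
    have := hr0 (f e) (Ideal.mem_map_of_mem f heI)
    rw [smul_eq_mul] at this
    calc f (e * (1 - e)) = f e * (1 - f e) := by simp [f]
    _ = (1 - r) * (1 - (1 - r)) := by rw [hef]
    _ = r * (1 - r) := by ring
    _ = r * f e := by rw [hef]
    _ = 0 := this
  · apply le_antisymm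
    · intro x hx
      have h1 : x - e * x ∈ J ⊔ Ideal.span {e} := Ideal.mem_sup_left (key x hx)
      have h2 : e * x ∈ J ⊔ Ideal.span {e} :=
        Ideal.mem_sup_right (Ideal.mul_mem_right x _ (Ideal.mem_span_singleton_self e))
      simpa using add_mem h1 h2
    · exact sup_le hJ ((Ideal.span_singleton_le_iff_mem I).mpr heI)
end

section
/- Let R be a commutative Noetherian ring and I a finitely generated ideal such that the quotient I/I² requires at most n generators as an R/I-module. Then I requires at most n+1 generators as an R-module. -/
/-- If `I/I²` is generated by `n` elements, then `I` is generated by `n+1` elements. -/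
theorem stmt_1 {R : Type*} [CommRing R] [IsNoetherianRing R]
    (I : Ideal R) (hfg : I.FG) (n : ℕ)
    (h : ∃ f : Fin n → R, (∀ i, f i ∈ I) ∧ I = Ideal.span (Set.range f) ⊔ I ^ 2) :
    ∃ g : Fin (n + 1) → R, I = Ideal.span (Set.range g) := by
  obtain ⟨f, hfI, hIJ⟩ := h
  set J : Ideal R := Ideal.span (Set.range f) with hJ
  have hJle : J ≤ I := Ideal.span_le.mpr (by rintro x ⟨i, rfl⟩; exact hfI i)
  -- work in R ⧸ J
  set N : Submodule R (R ⧸ J) := Submodule.map J.mkQ I with hN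
  have hNfg : N.FG := Submodule.FG.map _ hfg
  have hle : N ≤ I • N := by
    rintro x ⟨y, hy, rfl⟩
    have hy2 : y ∈ J ⊔ I ^ 2 := by rw [← hIJ]; exact hy
    rcases Submodule.mem_sup.mp hy2 with ⟨a, ha, b, hb, rfl⟩
    have ha0 : J.mkQ a = 0 := by
      rw [Submodule.mkQ_apply, Submodule.Quotient.mk_eq_zero]; exact ha
    have : J.mkQ (a + b) = J.mkQ b := by rw [map_add, ha0, zero_add]
    rw [this]
    have : I ^ 2 = I • I := by rw [pow_two, Ideal.smul_eq_mul]
    rw [this] at hb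
    refine Submodule.smul_induction_on hb ?_ ?_
    · intro r hr m hm
      rw [map_smul]
      exact Submodule.smul_mem_smul hr (Submodule.mem_map_of_mem hm)
    · intro x y hx hy; simpa [map_add] using Submodule.add_mem _ hx hy
  obtain ⟨r, hr1, hr0⟩ :=
    Submodule.exists_sub_one_mem_and_smul_eq_zero_of_fg_of_le_smul I N hNfg hle
  set e : R := 1 - r with he
  have heI : e ∈ I := by simpa [he] using I.neg_mem hr1
  refine ⟨Fin.cons e f, le_antisymm ?_ ?_⟩
  · intro x hx
    have hrx : r * x ∈ J := by
      have := hr0 (J.mkQ x) (Submodule.mem_map_of_mem hx)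
      rw [← map_smul] at this
      rwa [Submodule.mkQ_apply, Submodule.Quotient.mk_eq_zero, smul_eq_mul] at this
    have hx' : x = e * x + r * x := by ring
    rw [hx']
    have h1 : e * x ∈ Ideal.span (Set.range (Fin.cons e f)) := by
      exact Ideal.mul_mem_right _ _ (Ideal.subset_span ⟨0, rfl⟩)
    have h2 : r * x ∈ Ideal.span (Set.range (Fin.cons e f)) := by
      refine Ideal.span_mono ?_ hrx
      rintro y ⟨i, rfl⟩; exact ⟨i.succ, rfl⟩
    exact Ideal.add_mem _ h1 h2
  · rw [Ideal.span_le]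
    rintro x ⟨i, rfl⟩
    refine Fin.cases ?_ ?_ i
    · simpa using heI
    · intro j; simpa using hfI j
end

section
/- Let R be a commutative Noetherian ring and I, J ideals of R with J ⊆ I. Suppose there exists an element e ∈ I² such that I = J + (e) and e lies in the radical of J. Then J = I. -/
/-!
Modulo `J` the element `e` is nilpotent. Since `I² ⊆ J + (e²)`, we can write `e ≡ r e² (mod J)`,
i.e. `e (1 - r e) ∈ J`; as `r e` is nilpotent modulo `J`, the factor `1 - r e` is a unit there,
so `e ∈ J` and hence `I = J`.
-/

theorem IsNilpotent.eq_zero_of_eq_mul_sq {A : Type*} [CommRing A] {x r : A}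
    (hx : IsNilpotent x) (h : x = r * x ^ 2) : x = 0 := by
  have hunit : IsUnit (1 - r * x) := ((Commute.all r x).isNilpotent_mul_left hx).isUnit_one_sub
  have hmul : x * (1 - r * x) = 0 := by linear_combination h
  exact (hunit.mul_left_eq_zero).mp hmul

namespace Ideal

variable {R : Type*} [CommRing R]

theorem sup_span_singleton_sq_le (J : Ideal R) (e : R) :
    (J ⊔ span {e}) ^ 2 ≤ J ⊔ span {e ^ 2} := by
  rw [sq, sq e, sup_mul, mul_sup, mul_sup, span_singleton_mul_span_singleton]
  exact sup_le (sup_le (le_sup_left.trans' mul_le_left) (le_sup_left.trans' mul_le_left))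
    (sup_le (le_sup_left.trans' mul_le_right) le_sup_right)

theorem mem_of_mem_radical_of_sub_mul_sq_mem {J : Ideal R} {e r : R} (hrad : e ∈ J.radical)
    (h : e - r * e ^ 2 ∈ J) : e ∈ J := by
  rw [← Quotient.eq_zero_iff_mem] at h ⊢
  have hnil : IsNilpotent (Quotient.mk J e) := by
    obtain ⟨n, hn⟩ := hrad
    exact ⟨n, by rw [← map_pow, Quotient.eq_zero_iff_mem]; exact hn⟩
  refine hnil.eq_zero_of_eq_mul_sq (r := Quotient.mk J r) ?_
  rw [map_sub, sub_eq_zero] at h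
  simpa using h

end Ideal

theorem stmt_2_general {R : Type*} [CommRing R]
    (I J : Ideal R) (e : R) (he : e ∈ I ^ 2)
    (hI : I = J ⊔ Ideal.span {e}) (hrad : e ∈ J.radical) : J = I := by
  rw [hI] at he ⊢
  obtain ⟨r, j, hj, hrj⟩ := Ideal.mem_span_singleton_sup.mp
    (sup_comm J _ ▸ Ideal.sup_span_singleton_sq_le J e he)
  have hsub : e - r * e ^ 2 = j := by linear_combination -hrj
  have heJ : e ∈ J := Ideal.mem_of_mem_radical_of_sub_mul_sq_mem hrad (hsub ▸ hj)
  exact (sup_eq_left.mpr ((Ideal.span_singleton_le_iff_mem J).mpr heJ)).symm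

/-- If `J ⊆ I`, `e ∈ I²`, `I = J + (e)` and `e ∈ √J`, then `J = I`. -/
theorem stmt_2 {R : Type*} [CommRing R] [IsNoetherianRing R]
    (I J : Ideal R) (hJI : J ≤ I) (e : R) (he : e ∈ I ^ 2)
    (hI : I = J ⊔ Ideal.span {e}) (hrad : e ∈ J.radical) : J = I :=
  stmt_2_general I J e he hI hrad
end

section
/- Let R be a commutative Noetherian ring of Krull dimension d, I an ideal of R, and suppose there is a surjection of R/I-modules from (R/I)^(d+1) onto I/I². Then I is generated by d+1 elements, and moreover any lift of the d+1 generators of I/I² can be corrected modulo I² to give d+1 generators of I. -/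
/-!
The images of `f₀, …, f_d` generate `I` modulo `I²`, so by Nakayama there is `e ∈ I²` with
`I ⊆ (f₀, …, f_d) + (e)`. Replace the `fᵢ` one at a time by `gᵢ = fᵢ + μᵢ e`, choosing `μᵢ` by
prime avoidance so that `gᵢ` misses every minimal prime over `(g₀, …, gᵢ₋₁)` not containing `e`.
Then a prime containing all `gᵢ` but not `e` would be the top of a chain of primes of length
`d + 1`, so `e` lies in the radical of `B = (g₀, …, g_d)`. Finally `I = B + (e)` with `e ∈ I²`
gives `e ∈ B + (e²)`, and since `e` is nilpotent modulo `B`, `e ∈ B`.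
-/

open Ideal

namespace Ideal

variable {R : Type*} [CommRing R]

theorem exists_mem_sq_le_sup_span_singleton {I J : Ideal R} (hI : I.FG) (h : I ≤ J ⊔ I ^ 2) :
    ∃ e ∈ I ^ 2, I ≤ J ⊔ span {e} := by
  have hmap : I.map (Quotient.mk J) ≤ (I ^ 2).map (Quotient.mk J) := by
    simpa only [map_sup, map_quotient_self, bot_sup_eq] using map_mono (f := Quotient.mk J) h
  have hidem : IsIdempotentElem (I.map (Quotient.mk J)) :=
    le_antisymm mul_le_right (by rwa [Ideal.map_pow, sq] at hmap)
  obtain ⟨ε, -, hε⟩ := (isIdempotentElem_iff_of_fg _ (hI.map _)).mp hidem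
  obtain ⟨e, he, rfl⟩ := (mem_map_iff_of_surjective _ Quotient.mk_surjective).mp
    (hmap (by rw [hε]; exact mem_span_singleton_self _))
  refine ⟨e, he, ?_⟩
  calc I ≤ (I.map (Quotient.mk J)).comap (Quotient.mk J) := le_comap_map
    _ = ((span {e}).map (Quotient.mk J)).comap (Quotient.mk J) := by
      rw [hε, map_span, Set.image_singleton]
    _ = J ⊔ span {e} := by
      rw [comap_map_of_surjective' _ Quotient.mk_surjective, mk_ker, sup_comm]

theorem exists_add_mul_notMem_of_isAntichain {S : Finset (Ideal R)}
    (hprime : ∀ p ∈ S, p.IsPrime) (hS : IsAntichain (· ≤ ·) (S : Set (Ideal R)))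
    (a : R) {e : R} (he : ∀ p ∈ S, e ∉ p) : ∃ μ : R, ∀ p ∈ S, a + μ * e ∉ p := by
  classical
  obtain ⟨μ, hμU, hμT⟩ : ∃ μ ∈ (S.filter (a ∉ ·)).inf id,
      μ ∉ ⋃ p ∈ (S.filter (a ∈ ·) : Set (Ideal R)), (p : Set R) := by
    refine Set.not_subset.mp fun hsub => ?_
    obtain ⟨p, hpT, hle⟩ := (subset_union_prime (f := id) ⊥ ⊥
      fun p hp _ _ => hprime p (Finset.mem_filter.mp hp).1).mp hsub
    rw [Finset.mem_filter] at hpT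
    obtain ⟨q, hqU, hqp⟩ := ((hprime p hpT.1).inf_le').mp hle
    rw [Finset.mem_filter] at hqU
    exact hqU.2 (hS.eq hqU.1 hpT.1 hqp ▸ hpT.2)
  refine ⟨μ, fun p hp hmem => ?_⟩
  by_cases hap : a ∈ p
  · have : μ * e ∈ p := by simpa using p.sub_mem hmem hap
    rcases (hprime p hp).mem_or_mem this with h | h
    · exact hμT (Set.mem_biUnion (Finset.mem_filter.mpr ⟨hp, hap⟩) h)
    · exact he p hp h
  · have hμp : μ ∈ p := Finset.inf_le (f := id) (Finset.mem_filter.mpr ⟨hp, hap⟩) hμU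
    exact hap (by simpa using p.sub_mem hmem (p.mul_mem_right e hμp))

theorem exists_add_mul_notMem_minimalPrimes [IsNoetherianRing R] (K : Ideal R) (a e : R) :
    ∃ μ : R, ∀ p ∈ K.minimalPrimes, e ∉ p → a + μ * e ∉ p := by
  have hfin : {p ∈ K.minimalPrimes | e ∉ p}.Finite :=
    K.finite_minimalPrimes_of_isNoetherianRing.subset fun _ hp => hp.1
  obtain ⟨μ, hμ⟩ := exists_add_mul_notMem_of_isAntichain (S := hfin.toFinset)
    (fun p hp => ((Set.Finite.mem_toFinset _).mp hp).1.1.1)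
    (by rw [Set.Finite.coe_toFinset]; exact (setOfPred_minimal_antichain _).subset fun _ hp => hp.1)
    a (fun p hp => ((Set.Finite.mem_toFinset _).mp hp).2)
  exact ⟨μ, fun p hp he => hμ p ((Set.Finite.mem_toFinset _).mpr ⟨hp, he⟩)⟩

theorem exists_sub_mem_span_singleton_and_chain [IsNoetherianRing R] (e : R) :
    ∀ {n : ℕ} (f : Fin n → R), ∃ g : Fin n → R, (∀ i, g i - f i ∈ span {e}) ∧
      ∀ ch : LTSeries (PrimeSpectrum R), span (Set.range g) ≤ ch.head.asIdeal →
        e ∉ ch.last.asIdeal → ∃ ch' : LTSeries (PrimeSpectrum R), ch'.length = ch.length + n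
  | 0, f => ⟨f, fun i => i.elim0, fun ch _ _ => ⟨ch, rfl⟩⟩
  | n + 1, f => by
    obtain ⟨g, hgf, hg⟩ := exists_sub_mem_span_singleton_and_chain e (Fin.tail f)
    obtain ⟨μ, hμ⟩ := exists_add_mul_notMem_minimalPrimes (span (Set.range g)) (f 0) e
    refine ⟨Fin.cons (f 0 + μ * e) g, Fin.cases ?head hgf, fun ch hch he => ?_⟩
    case head => simpa using mul_mem_left _ μ (mem_span_singleton_self e)
    rw [Fin.range_cons, span_insert, sup_le_iff, span_singleton_le_iff_mem] at hch
    obtain ⟨q, hq, hqle⟩ := exists_minimalPrimes_le hch.2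
    have heq : e ∉ q := fun h => he (ch.head_le_last (hqle h))
    have hlt : (⟨q, hq.1.1⟩ : PrimeSpectrum R) < ch.head :=
      lt_of_le_of_ne hqle fun h => hμ q hq heq (by rw [← h] at hch; exact hch.1)
    obtain ⟨ch', hch'⟩ := hg (ch.cons _ hlt) hq.1.2 (by simpa using he)
    exact ⟨ch', by simp [hch']; ring⟩

theorem exists_sub_mem_span_singleton_and_mem_radical [IsNoetherianRing R] {n : ℕ}
    (hn : ringKrullDim R < n) (e : R) (f : Fin n → R) :
    ∃ g : Fin n → R, (∀ i, g i - f i ∈ span {e}) ∧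
      e ∈ (span (Set.range g)).radical := by
  obtain ⟨g, hgf, hg⟩ := exists_sub_mem_span_singleton_and_chain e f
  refine ⟨g, hgf, ?_⟩
  rw [radical_eq_sInf, mem_sInf]
  rintro p ⟨hle, hp⟩
  by_contra he
  obtain ⟨ch, hch⟩ := hg (RelSeries.singleton _ ⟨p, hp⟩) hle he
  have hlen := Order.LTSeries.length_le_krullDim ch
  rw [hch, RelSeries.singleton_length, zero_add] at hlen
  exact (hlen.trans_lt hn).false

theorem eq_of_le_sup_span_singleton_of_mem_radical {B I : Ideal R} {e : R} (hBI : B ≤ I)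
    (hI : I ≤ B ⊔ span {e}) (he : e ∈ I ^ 2) (hrad : e ∈ B.radical) : I = B := by
  refine le_antisymm (hI.trans (sup_le le_rfl ((span_singleton_le_iff_mem _).mpr ?_))) hBI
  rw [← Quotient.eq_zero_iff_mem]
  obtain ⟨n, hn⟩ := hrad
  have hnil : IsNilpotent (Quotient.mk B e) :=
    ⟨n, by rw [← map_pow, Quotient.eq_zero_iff_mem.mpr hn]⟩
  have hsq : Quotient.mk B e ∈ span {Quotient.mk B e ^ 2} := by
    have := map_mono (f := Quotient.mk B) (pow_left_mono 2 hI) (mem_map_of_mem _ he)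
    rwa [Ideal.map_pow, map_sup, map_quotient_self, bot_sup_eq, map_span, Set.image_singleton,
      span_singleton_pow] at this
  obtain ⟨c, hc⟩ := mem_span_singleton'.mp hsq
  have hunit : IsUnit (1 - c * Quotient.mk B e) :=
    ((Commute.all _ _).isNilpotent_mul_left hnil).isUnit_one_sub
  exact hunit.mul_left_eq_zero.mp (by linear_combination -hc)

end Ideal

/-- Mohan Kumar: if `dim R = d` and `I/I²` is generated by the images of
`f₀, …, f_d`, then these generators lift, modulo `I²`, to `d+1` generators of `I`. -/
theorem stmt_7 {R : Type*} [CommRing R] [IsNoetherianRing R]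
    (d : ℕ) (hd : ringKrullDim R = (d : WithBot ℕ∞))
    (I : Ideal R) (f : Fin (d + 1) → R) (hfI : ∀ i, f i ∈ I)
    (hgen : I = Ideal.span (Set.range f) ⊔ I ^ 2) :
    ∃ F : Fin (d + 1) → R,
      I = Ideal.span (Set.range F) ∧ ∀ i, F i - f i ∈ I ^ 2 := by
  obtain ⟨e, heI, hIe⟩ :=
    exists_mem_sq_le_sup_span_singleton (IsNoetherian.noetherian I) hgen.le
  obtain ⟨g, hgf, hrad⟩ := exists_sub_mem_span_singleton_and_mem_radical
    (by rw [hd]; exact_mod_cast d.lt_succ_self) e f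
  have hcorr : ∀ i, g i - f i ∈ I ^ 2 := fun i => (span_singleton_le_iff_mem _).mpr heI (hgf i)
  have hgI : span (Set.range g) ≤ I := span_le.mpr <| Set.range_subset_iff.mpr fun i => by
    simpa using I.add_mem (hfI i) (pow_le_self two_ne_zero (hcorr i))
  have hfg : span (Set.range f) ≤ span (Set.range g) ⊔ span {e} :=
    span_le.mpr <| Set.range_subset_iff.mpr fun i => by
      simpa using sub_mem (mem_sup_left (subset_span (Set.mem_range_self (f := g) i)))
        (mem_sup_right (hgf i))
  exact ⟨g, eq_of_le_sup_span_singleton_of_mem_radical hgI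
    (hIe.trans (sup_le hfg le_sup_right)) heI hrad, hcorr⟩
end

section
/- Let R be a commutative Noetherian ring of dimension d and I ⊆ R an ideal. Then there exists an ideal J of R with √I = √J such that J/J² is generated by at most d elements as an R/J-module. -/
/-! Prime avoidance gives `a₁, …, a_d ∈ I` such that every minimal prime of `A = (a₁, …, a_d)`
not containing `I` has height at least `d`, hence is maximal. So `V(A)` is `V(I)` together with
finitely many closed points comaximal with `I`. Writing `1 = e + m` with `e ∈ Iᵏ` and `m` in the
`k`-th power of the intersection `M` of those points, `e m ∈ (IM)ᵏ ⊆ (√A)ᵏ ⊆ A` for large `k`.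
Then `J = A + (e)` has `√J = √I`, and `e ≡ e² mod A` gives `J = A + J²`. -/

namespace Ideal

variable {R : Type*} [CommRing R]

theorem exists_mem_forall_notMem_of_finite {I : Ideal R} {T : Set (Ideal R)} (hT : T.Finite)
    (hprime : ∀ p ∈ T, p.IsPrime) (hI : ∀ p ∈ T, ¬ I ≤ p) : ∃ x ∈ I, ∀ p ∈ T, x ∉ p := by
  by_contra! hcover
  have hsub : (I : Set R) ⊆ ⋃ p ∈ (hT.toFinset : Set (Ideal R)), (p : Set R) := fun x hx ↦ by
    obtain ⟨p, hp, hxp⟩ := hcover x hx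
    exact Set.mem_biUnion (hT.mem_toFinset.mpr hp) hxp
  obtain ⟨p, hp, hIp⟩ :=
    (subset_union_prime (f := id) ⊥ ⊥ fun p hp _ _ ↦ hprime p (hT.mem_toFinset.mp hp)).mp hsub
  exact hI p (hT.mem_toFinset.mp hp) hIp

theorem exists_fin_forall_minimalPrimes_span_le_or_le_height [IsNoetherianRing R]
    (I : Ideal R) (n : ℕ) :
    ∃ a : Fin n → R, (∀ i, a i ∈ I) ∧
      ∀ p ∈ (span (Set.range a)).minimalPrimes, I ≤ p ∨ n ≤ p.height := by
  induction n with
  | zero => exact ⟨Fin.elim0, fun i ↦ i.elim0, fun p _ ↦ Or.inr (by simp)⟩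
  | succ n ih =>
    obtain ⟨a, haI, ha⟩ := ih
    obtain ⟨x, hxI, hx⟩ := exists_mem_forall_notMem_of_finite
      ((span (Set.range a)).finite_minimalPrimes_of_isNoetherianRing.subset
        (Set.sep_subset _ fun p ↦ ¬ I ≤ p))
      (fun p hp ↦ hp.1.1.1) fun p hp ↦ hp.2
    refine ⟨Fin.cons x a, Fin.cases hxI haI, fun q hq ↦ or_iff_not_imp_left.mpr fun hIq ↦ ?_⟩
    rw [Fin.range_cons, span_insert] at hq
    have := hq.1.1
    obtain ⟨p, hp, hpq⟩ := exists_minimalPrimes_le (le_sup_right.trans hq.1.2)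
    have := hp.1.1
    have hIp : ¬ I ≤ p := fun h ↦ hIq (h.trans hpq)
    have hxq : x ∈ q := hq.1.2 (mem_sup_left (mem_span_singleton_self x))
    have hpq' : p < q := lt_of_le_of_ne hpq fun h ↦ hx p ⟨hp, hIp⟩ (h ▸ hxq)
    calc ((n + 1 : ℕ) : ℕ∞) = n + 1 := Nat.cast_succ n
      _ ≤ p.height + 1 := by gcongr; exact (ha p hp).resolve_left hIp
      _ ≤ q.height := height_add_one_le_of_lt_of_isPrime hpq'

theorem IsPrime.isMaximal_of_ringKrullDim_le_height {p : Ideal R} [p.IsPrime] {n : ℕ}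
    (hdim : ringKrullDim R ≤ n) (hp : n ≤ p.height) : p.IsMaximal := by
  obtain ⟨m, hm, hpm⟩ := exists_le_maximal p IsPrime.ne_top'
  obtain hlt | rfl := hpm.lt_or_eq
  · have hmn : m.height ≤ n := by exact_mod_cast height_le_ringKrullDim_of_isPrime.trans hdim
    have : (n : ℕ∞) + 1 ≤ n := calc
      (n : ℕ∞) + 1 ≤ p.height + 1 := by gcongr
      _ ≤ m.height := height_add_one_le_of_lt_of_isPrime hlt
      _ ≤ n := hmn
    exact absurd this (by norm_cast; omega)
  · exact hm

theorem sup_eq_top_of_isMaximal_of_not_le {I p : Ideal R} (hp : p.IsMaximal) (hIp : ¬ I ≤ p) :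
    I ⊔ p = ⊤ := by
  by_contra hne
  exact hIp (le_sup_left.trans (hp.eq_of_le hne le_sup_right).ge)

theorem exists_mem_mul_one_sub_mem [IsNoetherianRing R] {A I : Ideal R}
    (h : ∀ p ∈ A.minimalPrimes, I ≤ p ∨ I ⊔ p = ⊤) :
    ∃ e ∈ I, e * (1 - e) ∈ A ∧ ∀ p ∈ A.minimalPrimes, I ≤ p ∨ 1 - e ∈ p := by
  classical
  set T := A.finite_minimalPrimes_of_isNoetherianRing.toFinset.filter (¬ I ≤ ·)
  have hT {p} : p ∈ T ↔ p ∈ A.minimalPrimes ∧ ¬ I ≤ p := by simp [T]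
  set M := ⨅ p ∈ T, p
  have hIM : IsCoprime I M := isCoprime_biInf fun p hp ↦
    isCoprime_iff_sup_eq.mpr ((h p (hT.mp hp).1).resolve_left (hT.mp hp).2)
  have hIMrad : I * M ≤ A.radical := by
    rw [← sInf_minimalPrimes]
    refine le_sInf fun p hp ↦ ?_
    by_cases hIp : I ≤ p
    · exact mul_le_left.trans hIp
    · exact mul_le_right.trans (iInf₂_le p (hT.mpr ⟨hp, hIp⟩))
  obtain ⟨k, hk⟩ := exists_pow_le_of_le_radical_of_fg hIMrad (IsNoetherian.noetherian _)
  obtain ⟨e, he, m, hm, hem⟩ := (hIM.pow (m := k + 1) (n := k + 1)).exists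
  obtain rfl : m = 1 - e := eq_sub_of_add_eq' hem
  refine ⟨e, pow_le_self k.succ_ne_zero he, ?_, fun p hp ↦ or_iff_not_imp_left.mpr fun hIp ↦ ?_⟩
  · refine (pow_le_pow_right k.le_succ).trans hk ?_
    rw [mul_pow]
    exact mul_mem_mul he hm
  · exact iInf₂_le (f := fun p _ ↦ p) p (hT.mpr ⟨hp, hIp⟩) (pow_le_self k.succ_ne_zero hm)

theorem sup_span_singleton_eq_sup_sq {A : Ideal R} {e : R} (he : e * (1 - e) ∈ A) :
    A ⊔ span {e} = A ⊔ (A ⊔ span {e}) ^ 2 := by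
  refine le_antisymm (sup_le le_sup_left ?_) (sup_le le_sup_left (pow_le_self two_ne_zero))
  rw [span_singleton_le_iff_mem]
  have hsq : e ^ 2 ∈ (A ⊔ span {e}) ^ 2 := pow_mem_pow (mem_sup_right (mem_span_singleton_self e)) 2
  convert add_mem (mem_sup_left he) (mem_sup_right hsq) using 1
  ring

theorem radical_sup_span_singleton_eq {A I : Ideal R} {e : R} (hAI : A ≤ I) (he : e ∈ I)
    (h : ∀ p ∈ A.minimalPrimes, I ≤ p ∨ 1 - e ∈ p) : (A ⊔ span {e}).radical = I.radical := by
  refine le_antisymm (radical_mono (sup_le hAI (span_singleton_le_iff_mem _ |>.mpr he))) ?_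
  rw [radical_le_radical_iff, radical_eq_sInf]
  refine le_sInf fun P ⟨hJP, hP⟩ ↦ ?_
  obtain ⟨p, hp, hpP⟩ := exists_minimalPrimes_le (le_sup_left.trans hJP)
  refine (h p hp).elim (·.trans hpP) fun hep ↦ absurd ?_ hP.ne_top
  rw [eq_top_iff_one, ← sub_add_cancel 1 e]
  exact add_mem (hpP hep) (hJP (mem_sup_right (mem_span_singleton_self e)))

theorem exists_radical_eq_and_eq_sup_sq [IsNoetherianRing R] {A I : Ideal R} (hAI : A ≤ I)
    (h : ∀ p ∈ A.minimalPrimes, I ≤ p ∨ I ⊔ p = ⊤) :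
    ∃ J : Ideal R, J.radical = I.radical ∧ A ≤ J ∧ J = A ⊔ J ^ 2 := by
  obtain ⟨e, heI, he, hp⟩ := exists_mem_mul_one_sub_mem h
  exact ⟨A ⊔ span {e}, radical_sup_span_singleton_eq hAI heI hp, le_sup_left,
    sup_span_singleton_eq_sup_sq he⟩

end Ideal

/-- Boratyński–Katz: for any ideal `I` in a Noetherian ring of dimension `d` there is
an ideal `J` with `√I = √J` and `J/J²` generated by at most `d` elements. -/
theorem stmt_16 {R : Type*} [CommRing R] [IsNoetherianRing R]
    (d : ℕ) (hd : ringKrullDim R = (d : WithBot ℕ∞)) (I : Ideal R) :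
    ∃ J : Ideal R, I.radical = J.radical ∧
      ∃ f : Fin d → R, (∀ i, f i ∈ J) ∧ J = Ideal.span (Set.range f) ⊔ J ^ 2 := by
  obtain ⟨a, haI, ha⟩ := I.exists_fin_forall_minimalPrimes_span_le_or_le_height d
  have hcomax : ∀ p ∈ (Ideal.span (Set.range a)).minimalPrimes, I ≤ p ∨ I ⊔ p = ⊤ :=
    fun p hp ↦ or_iff_not_imp_left.mpr fun hIp ↦
      have := hp.1.1
      Ideal.sup_eq_top_of_isMaximal_of_not_le
        (Ideal.IsPrime.isMaximal_of_ringKrullDim_le_height hd.le ((ha p hp).resolve_left hIp)) hIp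
  obtain ⟨J, hJ, haJ, hJsq⟩ := Ideal.exists_radical_eq_and_eq_sup_sq
    (Ideal.span_le.mpr (Set.range_subset_iff.mpr haI)) hcomax
  exact ⟨J, hJ.symm, a, fun i ↦ haJ (Ideal.subset_span (Set.mem_range_self i)), hJsq⟩
end
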